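/- Price's Theorem (univariate): If θ ~ N(μ, σ²) and f : ℝ → ℝ is twice differentiable with suitable integrability, then the derivative of E[f(θ)] with respect to σ² equals (1/2) E[f''(θ)]. -/

import Mathlib

/-!
The density `p(v, θ)` solves the heat equation `∂ᵥ p = ½ ∂²_θ p`. Differentiating under the
integral sign is justified by dominated convergence, since for `w` near `v` the derivative
`∂_w p(w, θ) f(θ)` is bounded by a polynomial times a fixed Gaussian. This gives
`∂ᵥ E[f] = ½ ∫ ∂²_θ p · f`, and integrating by parts twice moves both derivatives onto `f`;
the boundary terms vanish because Gaussian decay beats the polynomial growth of `f` and `f'`.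
-/

open MeasureTheory Real

/-- Univariate Gaussian density of `N(μ, v)` parameterized by the variance `v`. -/
noncomputable def gaussPDFv (μ v : ℝ) (θ : ℝ) : ℝ :=
  (2 * Real.pi * v) ^ (-(1 : ℝ) / 2) * Real.exp (-(θ - μ) ^ 2 / (2 * v))

def HasPolynomialGrowth (g : ℝ → ℝ) : Prop :=
  ∃ (c : ℝ) (n : ℕ), ∀ x, |g x| ≤ c * (1 + |x|) ^ n

lemma hasPolynomialGrowth_const (a : ℝ) : HasPolynomialGrowth fun _ => a :=
  ⟨|a|, 0, by simp⟩

lemma hasPolynomialGrowth_id : HasPolynomialGrowth fun x => x :=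
  ⟨1, 1, fun x => by simp⟩

namespace HasPolynomialGrowth

variable {g h : ℝ → ℝ}

lemma nonneg_of_abs_le {c : ℝ} {n : ℕ} (hc : ∀ x, |g x| ≤ c * (1 + |x|) ^ n) : 0 ≤ c := by
  simpa using (abs_nonneg _).trans (hc 0)

lemma abs (hg : HasPolynomialGrowth g) : HasPolynomialGrowth fun x => |g x| := by
  simpa only [HasPolynomialGrowth, abs_abs] using hg

lemma neg (hg : HasPolynomialGrowth g) : HasPolynomialGrowth fun x => -g x := by
  simpa only [HasPolynomialGrowth, abs_neg] using hg

lemma add (hg : HasPolynomialGrowth g) (hh : HasPolynomialGrowth h) :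
    HasPolynomialGrowth fun x => g x + h x := by
  obtain ⟨c, n, hc⟩ := hg
  obtain ⟨d, m, hd⟩ := hh
  refine ⟨c + d, n + m, fun x => ?_⟩
  have h1 : 1 ≤ 1 + |x| := le_add_of_nonneg_right (abs_nonneg x)
  calc |g x + h x| ≤ c * (1 + |x|) ^ n + d * (1 + |x|) ^ m :=
        (abs_add_le _ _).trans (add_le_add (hc x) (hd x))
    _ ≤ c * (1 + |x|) ^ (n + m) + d * (1 + |x|) ^ (n + m) := by
        gcongr
        · exact nonneg_of_abs_le hc
        · omega
        · exact nonneg_of_abs_le hd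
        · omega
    _ = (c + d) * (1 + |x|) ^ (n + m) := by ring

lemma sub (hg : HasPolynomialGrowth g) (hh : HasPolynomialGrowth h) :
    HasPolynomialGrowth fun x => g x - h x := by
  simpa only [sub_eq_add_neg] using hg.add hh.neg

lemma mul (hg : HasPolynomialGrowth g) (hh : HasPolynomialGrowth h) :
    HasPolynomialGrowth fun x => g x * h x := by
  obtain ⟨c, n, hc⟩ := hg
  obtain ⟨d, m, hd⟩ := hh
  refine ⟨c * d, n + m, fun x => ?_⟩
  rw [abs_mul, pow_add, mul_mul_mul_comm]
  exact mul_le_mul (hc x) (hd x) (abs_nonneg _) ((abs_nonneg _).trans (hc x))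

lemma pow (hg : HasPolynomialGrowth g) (k : ℕ) : HasPolynomialGrowth fun x => g x ^ k := by
  induction k with
  | zero => simpa using hasPolynomialGrowth_const 1
  | succ k ih => simpa only [pow_succ] using ih.mul hg

lemma div_const (hg : HasPolynomialGrowth g) (a : ℝ) : HasPolynomialGrowth fun x => g x / a := by
  simpa only [div_eq_mul_inv] using hg.mul (hasPolynomialGrowth_const a⁻¹)

end HasPolynomialGrowth

lemma integrable_one_add_abs_pow_mul_exp_neg_mul_sq {a : ℝ} (ha : 0 < a) (n : ℕ) :
    Integrable fun x : ℝ => (1 + |x|) ^ n * exp (-a * x ^ 2) := by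
  have hpow : Integrable fun x : ℝ => |x| ^ n * exp (-a * x ^ 2) := by
    simpa [abs_mul, abs_of_pos (exp_pos _)] using
      (integrable_rpow_mul_exp_neg_mul_sq ha (s := n) (by linarith [n.cast_nonneg (α := ℝ)])).abs
  refine (((integrable_exp_neg_mul_sq ha).add hpow).const_mul (2 ^ (n - 1))).mono'
    (by fun_prop) (.of_forall fun x => ?_)
  have hbinom := add_pow_le zero_le_one (abs_nonneg x) n
  rw [one_pow] at hbinom
  rw [norm_of_nonneg (by positivity), Pi.add_apply, ← one_add_mul, ← mul_assoc]
  gcongr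

lemma HasPolynomialGrowth.integrable_mul_exp_neg_mul_sq {g : ℝ → ℝ}
    (hg : HasPolynomialGrowth g) (hgm : AEStronglyMeasurable g) {a : ℝ} (ha : 0 < a) (μ : ℝ) :
    Integrable fun x => g x * exp (-a * (x - μ) ^ 2) := by
  obtain ⟨c, n, hc⟩ := hg
  refine (((integrable_one_add_abs_pow_mul_exp_neg_mul_sq ha n).comp_sub_right μ).const_mul
    (c * (1 + |μ|) ^ n)).mono' (hgm.mul (by fun_prop)) (.of_forall fun x => ?_)
  have hshift : 1 + |x| ≤ (1 + |μ|) * (1 + |x - μ|) := by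
    nlinarith [abs_sub_abs_le_abs_sub x μ, abs_nonneg μ, abs_nonneg (x - μ)]
  have hc₀ := HasPolynomialGrowth.nonneg_of_abs_le hc
  calc ‖g x * exp (-a * (x - μ) ^ 2)‖ = |g x| * exp (-a * (x - μ) ^ 2) := by
        rw [norm_mul, norm_of_nonneg (exp_pos _).le, norm_eq_abs]
    _ ≤ c * ((1 + |μ|) * (1 + |x - μ|)) ^ n * exp (-a * (x - μ) ^ 2) := by
        gcongr
        exact (hc x).trans (by gcongr)
    _ = c * (1 + |μ|) ^ n * ((1 + |x - μ|) ^ n * exp (-a * (x - μ) ^ 2)) := by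
        rw [mul_pow]; ring

section Gaussian

variable {μ v w : ℝ}

@[fun_prop]
lemma continuous_gaussPDFv (μ v : ℝ) : Continuous (gaussPDFv μ v) := by
  unfold gaussPDFv; fun_prop

lemma gaussPDFv_pos (μ : ℝ) (hv : 0 < v) (θ : ℝ) : 0 < gaussPDFv μ v θ := by
  unfold gaussPDFv
  have : 0 < 2 * π * v := by positivity
  positivity

lemma HasPolynomialGrowth.integrable_gaussPDFv_mul {g : ℝ → ℝ} (hg : HasPolynomialGrowth g)
    (hgm : AEStronglyMeasurable g) (hv : 0 < v) :
    Integrable fun x => gaussPDFv μ v x * g x := by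
  refine ((hg.integrable_mul_exp_neg_mul_sq hgm (a := 1 / (2 * v)) (by positivity) μ).const_mul
    ((2 * π * v) ^ (-(1 : ℝ) / 2))).congr (.of_forall fun x => ?_)
  simp only [gaussPDFv]
  ring_nf

lemma hasDerivAt_gaussPDFv (μ : ℝ) (hv : 0 < v) (θ : ℝ) :
    HasDerivAt (gaussPDFv μ v) (gaussPDFv μ v θ * (-(θ - μ) / v)) θ := by
  have hexp : HasDerivAt (fun t : ℝ => -(t - μ) ^ 2 / (2 * v)) (-(θ - μ) / v) θ :=
    (((hasDerivAt_id θ).sub_const μ).pow 2).neg.div_const (2 * v) |>.congr_deriv <| by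
      simp only [id]; field_simp; ring
  exact (hexp.exp.const_mul ((2 * π * v) ^ (-(1 : ℝ) / 2))).congr_deriv
    (by unfold gaussPDFv; ring)

lemma hasDerivAt_gaussPDFv_mul (μ : ℝ) (hv : 0 < v) (θ : ℝ) :
    HasDerivAt (fun t => gaussPDFv μ v t * (-(t - μ) / v))
      (gaussPDFv μ v θ * ((θ - μ) ^ 2 / v ^ 2 - 1 / v)) θ :=
  (hasDerivAt_gaussPDFv μ hv θ).mul (((hasDerivAt_id θ).sub_const μ).neg.div_const v)
    |>.congr_deriv (by simp only [id, Pi.neg_apply]; ring)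

/-- The heat equation `∂ᵥ p = ½ ∂²_θ p` (`∂²_θ p` as in `hasDerivAt_gaussPDFv_mul`). -/
lemma hasDerivAt_gaussPDFv_variance (μ θ : ℝ) (hv : 0 < v) :
    HasDerivAt (fun w => gaussPDFv μ w θ)
      (1 / 2 * (gaussPDFv μ v θ * ((θ - μ) ^ 2 / v ^ 2 - 1 / v))) v := by
  have h2πv : 0 < 2 * π * v := by positivity
  have hpow : HasDerivAt (fun w : ℝ => (2 * π * w) ^ (-(1 : ℝ) / 2))
      (-(1 : ℝ) / 2 * (2 * π * v) ^ (-(1 : ℝ) / 2 - 1) * (2 * π)) v :=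
    (hasDerivAt_rpow_const (Or.inl h2πv.ne')).comp v
      (by simpa using (hasDerivAt_id v).const_mul (2 * π))
  have hexp : HasDerivAt (fun w : ℝ => -(θ - μ) ^ 2 / (2 * w))
      ((θ - μ) ^ 2 / (2 * v ^ 2)) v := by
    have hfun : (fun w : ℝ => -(θ - μ) ^ 2 / (2 * w)) = fun w => -(θ - μ) ^ 2 / 2 * w⁻¹ := by
      funext w; ring
    rw [hfun]
    exact (hasDerivAt_inv hv.ne').const_mul _ |>.congr_deriv (by field_simp)
  refine (hpow.mul hexp.exp).congr_deriv ?_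
  rw [rpow_sub h2πv, rpow_one]
  simp only [gaussPDFv]
  field_simp
  ring

/-- Two integrations by parts: `∫ ∂²_θ p · f = ∫ p · f''`. -/
lemma integral_gaussPDFv_mul_second_deriv (hv : 0 < v) {f f' f'' : ℝ → ℝ}
    (hderiv : ∀ x, HasDerivAt f (f' x) x) (hderiv' : ∀ x, HasDerivAt f' (f'' x) x)
    (hf : HasPolynomialGrowth f) (hf' : HasPolynomialGrowth f')
    (hf'' : HasPolynomialGrowth f'') :
    ∫ x, gaussPDFv μ v x * ((x - μ) ^ 2 / v ^ 2 - 1 / v) * f x =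
      ∫ x, gaussPDFv μ v x * f'' x := by
  have hfc : Continuous f := continuous_iff_continuousAt.2 fun x => (hderiv x).continuousAt
  have hf'c : Continuous f' := continuous_iff_continuousAt.2 fun x => (hderiv' x).continuousAt
  have hf''m : AEStronglyMeasurable f'' := by
    rw [show f'' = deriv f' from funext fun x => (hderiv' x).deriv.symm]
    exact (stronglyMeasurable_deriv f').aestronglyMeasurable
  have hlin : HasPolynomialGrowth fun x => -(x - μ) / v :=
    (hasPolynomialGrowth_id.sub (hasPolynomialGrowth_const μ)).neg.div_const v
  have hquad : HasPolynomialGrowth fun x => (x - μ) ^ 2 / v ^ 2 - 1 / v :=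
    ((hasPolynomialGrowth_id.sub (hasPolynomialGrowth_const μ)).pow 2).div_const _ |>.sub
      (hasPolynomialGrowth_const _)
  have hint_f'' := hf''.integrable_gaussPDFv_mul (μ := μ) hf''m hv
  have hint_f' := hf'.integrable_gaussPDFv_mul (μ := μ) hf'c.aestronglyMeasurable hv
  have hint_lin_f' := (hlin.mul hf').integrable_gaussPDFv_mul (μ := μ) (by fun_prop) hv
  have hint_lin_f := (hlin.mul hf).integrable_gaussPDFv_mul (μ := μ) (by fun_prop) hv
  have hint_quad_f := (hquad.mul hf).integrable_gaussPDFv_mul (μ := μ) (by fun_prop) hv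
  simp only [← mul_assoc] at hint_lin_f' hint_lin_f hint_quad_f
  have ibp₁ := integral_mul_deriv_eq_deriv_mul_of_integrable
    (fun x _ => hasDerivAt_gaussPDFv μ hv x) (fun x _ => hderiv' x) hint_f'' hint_lin_f' hint_f'
  have ibp₂ := integral_mul_deriv_eq_deriv_mul_of_integrable
    (fun x _ => hasDerivAt_gaussPDFv_mul μ hv x) (fun x _ => hderiv x) hint_lin_f' hint_quad_f
    hint_lin_f
  rw [ibp₁, ibp₂, neg_neg]

lemma gaussPDFv_le_of_mem_Ioo (μ θ : ℝ) (hw : w ∈ Set.Ioo (v / 2) (3 * v / 2)) :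
    gaussPDFv μ w θ ≤ (π * v) ^ (-(1 : ℝ) / 2) * exp (-(1 / (3 * v)) * (θ - μ) ^ 2) := by
  obtain ⟨hw₁, hw₂⟩ := hw
  have hv : 0 < v := by linarith
  unfold gaussPDFv
  gcongr ?_ * exp ?_
  · exact rpow_le_rpow_of_nonpos (by positivity) (by nlinarith [pi_pos]) (by norm_num)
  · rw [neg_div, neg_mul, neg_le_neg_iff, one_div_mul_eq_div]
    exact div_le_div_of_nonneg_left (sq_nonneg _) (by linarith) (by linarith)

lemma abs_sq_div_sq_sub_one_div_le (t : ℝ) (hv : 0 < v) (hw : v / 2 < w) :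
    |t ^ 2 / w ^ 2 - 1 / w| ≤ 4 / v ^ 2 * t ^ 2 + 2 / v := by
  have hw₀ : 0 < w := by linarith
  have hsq : t ^ 2 / w ^ 2 ≤ 4 / v ^ 2 * t ^ 2 := by
    rw [div_mul_eq_mul_div, mul_comm, div_le_div_iff₀ (by positivity) (by positivity)]
    have hvw : v ^ 2 ≤ 4 * w ^ 2 := by nlinarith
    nlinarith [mul_le_mul_of_nonneg_left hvw (sq_nonneg t)]
  have hinv : 1 / w ≤ 2 / v := by
    rw [div_le_div_iff₀ hw₀ hv]; linarith
  calc |t ^ 2 / w ^ 2 - 1 / w| ≤ |t ^ 2 / w ^ 2| + |1 / w| := abs_sub _ _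
    _ = t ^ 2 / w ^ 2 + 1 / w := by rw [abs_of_nonneg (by positivity), abs_of_pos (by positivity)]
    _ ≤ 4 / v ^ 2 * t ^ 2 + 2 / v := add_le_add hsq hinv

lemma hasDerivAt_integral_gaussPDFv_mul (hv : 0 < v) {f : ℝ → ℝ}
    (hfm : AEStronglyMeasurable f) (hf : HasPolynomialGrowth f) :
    HasDerivAt (fun w => ∫ θ, gaussPDFv μ w θ * f θ)
      (∫ θ, 1 / 2 * (gaussPDFv μ v θ * ((θ - μ) ^ 2 / v ^ 2 - 1 / v)) * f θ) v := by
  set bound : ℝ → ℝ := fun θ => (π * v) ^ (-(1 : ℝ) / 2) *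
    (((4 / v ^ 2 * (θ - μ) ^ 2 + 2 / v) * |f θ|) * exp (-(1 / (3 * v)) * (θ - μ) ^ 2))
  have hbound_int : Integrable bound := by
    refine Integrable.const_mul ?_ _
    refine HasPolynomialGrowth.integrable_mul_exp_neg_mul_sq ?_ (by fun_prop) (by positivity) μ
    exact (((hasPolynomialGrowth_const _).mul ((hasPolynomialGrowth_id.sub
      (hasPolynomialGrowth_const μ)).pow 2)).add (hasPolynomialGrowth_const _)).mul hf.abs
  refine (hasDerivAt_integral_of_dominated_loc_of_deriv_le (bound := bound)
    (F' := fun w θ => 1 / 2 * (gaussPDFv μ w θ * ((θ - μ) ^ 2 / w ^ 2 - 1 / w)) * f θ)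
    (Ioo_mem_nhds (by linarith : v / 2 < v) (by linarith : v < 3 * v / 2))
    (.of_forall fun w => by fun_prop)
    (hf.integrable_gaussPDFv_mul hfm hv) (by fun_prop) ?_ hbound_int ?_).2
  · refine .of_forall fun θ w hw => ?_
    have hp := gaussPDFv_pos μ (by linarith [hw.1] : 0 < w) θ
    calc ‖1 / 2 * (gaussPDFv μ w θ * ((θ - μ) ^ 2 / w ^ 2 - 1 / w)) * f θ‖
        = 1 / 2 * (gaussPDFv μ w θ * (|(θ - μ) ^ 2 / w ^ 2 - 1 / w| * |f θ|)) := by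
          rw [norm_mul, norm_mul, norm_mul, norm_of_nonneg one_half_pos.le,
            norm_of_nonneg hp.le, norm_eq_abs, norm_eq_abs]
          ring
      _ ≤ gaussPDFv μ w θ * (|(θ - μ) ^ 2 / w ^ 2 - 1 / w| * |f θ|) := by
          have := mul_nonneg hp.le
            (by positivity : 0 ≤ |(θ - μ) ^ 2 / w ^ 2 - 1 / w| * |f θ|)
          linarith
      _ ≤ (π * v) ^ (-(1 : ℝ) / 2) * exp (-(1 / (3 * v)) * (θ - μ) ^ 2) *
            ((4 / v ^ 2 * (θ - μ) ^ 2 + 2 / v) * |f θ|) := by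
          gcongr
          · exact gaussPDFv_le_of_mem_Ioo μ θ hw
          · exact abs_sq_div_sq_sub_one_div_le _ hv hw.1
      _ = bound θ := by ring
  · exact .of_forall fun θ w hw =>
      (hasDerivAt_gaussPDFv_variance μ θ (by linarith [hw.1])).mul_const (f θ)

end Gaussian

/-- Price's Theorem (univariate): for `θ ~ N(μ, v)` and twice differentiable `f` with
`f, f', f''` of at most polynomial growth, `∂/∂v E[f(θ)] = (1/2) E[f''(θ)]`. -/
theorem price_univariate (μ v : ℝ) (hv : 0 < v) (f f' f'' : ℝ → ℝ)
    (hderiv : ∀ x, HasDerivAt f (f' x) x)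
    (hderiv' : ∀ x, HasDerivAt f' (f'' x) x)
    (hfpoly : ∃ c n, ∀ x : ℝ, |f x| ≤ c * (1 + |x|) ^ n)
    (hf'poly : ∃ c n, ∀ x : ℝ, |f' x| ≤ c * (1 + |x|) ^ n)
    (hf''poly : ∃ c n, ∀ x : ℝ, |f'' x| ≤ c * (1 + |x|) ^ n) :
    HasDerivAt (fun w : ℝ => ∫ θ : ℝ, gaussPDFv μ w θ * f θ)
      ((1 / 2) * ∫ θ : ℝ, gaussPDFv μ v θ * f'' θ) v := by
  have hfc : Continuous f := continuous_iff_continuousAt.2 fun x => (hderiv x).continuousAt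
  rw [← integral_gaussPDFv_mul_second_deriv hv hderiv hderiv' hfpoly hf'poly hf''poly,
    ← integral_const_mul]
  simpa only [mul_assoc] using hasDerivAt_integral_gaussPDFv_mul hv hfc.aestronglyMeasurable hfpoly
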